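/- The discrete PDE filter is bound-preserving whenever r²L + I is a (symmetric) M-matrix with zero row sums for L and nonnegative inverse: if L is symmetric, has zero row sums, nonpositive off-diagonal entries, and m ≤ s̃ᵢ ≤ M for all i, then the solution of (r²L + I)s̄ = s̃ satisfies m ≤ s̄ᵢ ≤ M for all i. -/
import Mathlib

lemma pde_filter_aux (n : ℕ) (r : ℝ)
    (L : Matrix (Fin n) (Fin n) ℝ)
    (hoff : ∀ i j, i ≠ j → L i j ≤ 0)
    (hrow : ∀ i, ∑ j, L i j = 0)
    (M : ℝ) (stilde sbar : Fin n → ℝ)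
    (hub : ∀ i, stilde i ≤ M)
    (hsol : (r ^ 2 • L + 1).mulVec sbar = stilde) :
    ∀ i, sbar i ≤ M := by
  intro i
  have hne : Nonempty (Fin n) := ⟨i⟩
  obtain ⟨k, hk⟩ := Finite.exists_max sbar
  have h1 := congrFun hsol k
  rw [Matrix.add_mulVec, Matrix.one_mulVec, Matrix.smul_mulVec] at h1
  simp only [Pi.add_apply, Pi.smul_apply, smul_eq_mul] at h1
  have hker : L.mulVec sbar k = ∑ j, L k j * (sbar j - sbar k) := by
    simp [Matrix.mulVec, dotProduct, mul_sub, Finset.sum_sub_distrib,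
      ← Finset.sum_mul, hrow]
  have hsum : 0 ≤ L.mulVec sbar k := by
    rw [hker]
    apply Finset.sum_nonneg
    intro j _
    rcases eq_or_ne j k with h | h
    · simp [h]
    · nlinarith [hoff k j h.symm, hk j]
  have hk' : sbar k ≤ stilde k := by nlinarith [sq_nonneg r]
  calc sbar i ≤ sbar k := hk i
    _ ≤ stilde k := hk'
    _ ≤ M := hub k

theorem pde_filter_bound_preserving (n : ℕ) (r : ℝ)
    (L : Matrix (Fin n) (Fin n) ℝ)
    (hsym : L.IsSymm)
    (hoff : ∀ i j, i ≠ j → L i j ≤ 0)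
    (hrow : ∀ i, ∑ j, L i j = 0)
    (m M : ℝ) (stilde sbar : Fin n → ℝ)
    (hbounds : ∀ i, m ≤ stilde i ∧ stilde i ≤ M)
    (hsol : (r ^ 2 • L + 1).mulVec sbar = stilde) :
    ∀ i, m ≤ sbar i ∧ sbar i ≤ M := by
  intro i
  constructor
  · have hneg : (r ^ 2 • L + 1).mulVec (-sbar) = -stilde := by
      rw [Matrix.mulVec_neg, hsol]
    have := pde_filter_aux n r L hoff hrow (-m) (-stilde) (-sbar)
      (fun j => by simpa using (hbounds j).1) hneg i
    simpa using this
  · exact pde_filter_aux n r L hoff hrow M stilde sbar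
      (fun j => (hbounds j).2) hsol i
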